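/- arXiv:1612.01169 — 2 statements merged into one kernel-verified Lean document; each statement's English description precedes it below -/
import Mathlib

section
/- A (d-1)-dimensional flag homology sphere Δ has polar size π_Δ = 1 if and only if Δ is the suspension of a (d-2)-dimensional flag homology sphere. -/
open Finset Polynomial

noncomputable section

/-- An abstract simplicial complex on vertex type `V` (the empty set is always a face). -/
structure SC (V : Type) where
  faces : Set (Finset V)
  empty_mem : ∅ ∈ faces
  down : ∀ ⦃s t : Finset V⦄, s ∈ faces → t ⊆ s → t ∈ faces

namespace SC

variable {V W : Type} [DecidableEq V] [DecidableEq W]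

/-- The vertex set of a simplicial complex. -/
def verts (K : SC V) : Set V := {v | {v} ∈ K.faces}

/-- The set of faces of cardinality `n`. -/
def facesCard (K : SC V) (n : ℕ) : Set (Finset V) := {s | s ∈ K.faces ∧ s.card = n}

/-- `fvec K i` is the number of faces of cardinality `i` (so `fvec K 0 = 1`). -/
def fvec (K : SC V) (i : ℕ) : ℕ := (K.facesCard i).ncard

/-- A complex is flag if every clique of its graph (on its vertex set) is a face;
equivalently, all minimal non-faces have two elements. -/
def Flag (K : SC V) : Prop :=
  ∀ s : Finset V, ↑s ⊆ K.verts →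
    (∀ u ∈ s, ∀ v ∈ s, u ≠ v → ({u, v} : Finset V) ∈ K.faces) → s ∈ K.faces

/-- The link of a face. -/
def lk (K : SC V) (f : Finset V) : SC V where
  faces := {s | s = ∅ ∨ (Disjoint s f ∧ s ∪ f ∈ K.faces)}
  empty_mem := Or.inl rfl
  down := by
    rintro s t (rfl | ⟨hd, hu⟩) hts
    · exact Or.inl (Finset.subset_empty.mp hts)
    · exact Or.inr ⟨hd.mono_left hts, K.down hu (Finset.union_subset_union hts le_rfl)⟩

/-- The induced subcomplex on a set `U` of vertices. -/
def induce (K : SC V) (U : Set V) : SC V where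
  faces := {s | s ∈ K.faces ∧ ↑s ⊆ U}
  empty_mem := ⟨K.empty_mem, by simp⟩
  down := fun s t hs hts => ⟨K.down hs.1 hts, (Finset.coe_subset.mpr hts).trans hs.2⟩

/-- The `k`-skeleton: all faces of dimension at most `k` (cardinality at most `k+1`). -/
def skeleton (K : SC V) (k : ℕ) : SC V where
  faces := {s | s ∈ K.faces ∧ s.card ≤ k + 1}
  empty_mem := ⟨K.empty_mem, by simp⟩
  down := fun s t hs hts => ⟨K.down hs.1 hts, le_trans (Finset.card_le_card hts) hs.2⟩

/-- The join of two simplicial complexes. -/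
def join (K : SC V) (L : SC W) : SC (V ⊕ W) where
  faces := {s | s.toLeft ∈ K.faces ∧ s.toRight ∈ L.faces}
  empty_mem := by
    have h1 : (∅ : Finset (V ⊕ W)).toLeft = ∅ := by ext a; simp
    have h2 : (∅ : Finset (V ⊕ W)).toRight = ∅ := by ext a; simp
    exact ⟨h1 ▸ K.empty_mem, h2 ▸ L.empty_mem⟩
  down := fun s t hs hts =>
    ⟨K.down hs.1 fun a ha => Finset.mem_toLeft.mpr (hts (Finset.mem_toLeft.mp ha)),
     L.down hs.2 fun a ha => Finset.mem_toRight.mpr (hts (Finset.mem_toRight.mp ha))⟩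

/-- The two-point (0-dimensional) sphere `S⁰`. -/
def S0 : SC Bool where
  faces := {s | s.card ≤ 1}
  empty_mem := by simp
  down := fun s t hs hts => le_trans (Finset.card_le_card hts) hs

/-- The suspension `ΣK = S⁰ ∗ K`. -/
def susp (K : SC V) : SC (Bool ⊕ V) := S0.join K

/-- An isomorphism of simplicial complexes along a vertex map. -/
def IsIso (φ : V → W) (K : SC V) (L : SC W) : Prop :=
  Set.InjOn φ K.verts ∧ φ '' K.verts = L.verts ∧
    ∀ s : Finset V, ↑s ⊆ K.verts → (s ∈ K.faces ↔ s.image φ ∈ L.faces)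

/-- Two simplicial complexes are isomorphic (have the same combinatorial type). -/
def Isom (K : SC V) (L : SC W) : Prop := ∃ φ : V → W, IsIso φ K L

/-- The cycle (1-dimensional sphere) on `n` vertices. -/
def cycleC (n : ℕ) : SC (Fin n) where
  faces := {s | s.card ≤ 1 ∨ ∃ i : Fin n, s ⊆ {i, Fin.mk ((i.1 + 1) % n) (Nat.mod_lt _ i.pos)}}
  empty_mem := Or.inl (by simp)
  down := by
    rintro s t (h | ⟨i, hi⟩) hts
    · exact Or.inl (le_trans (Finset.card_le_card hts) h)
    · exact Or.inr ⟨i, hts.trans hi⟩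

/-- The part of a face in the `j`-th pentagon. -/
def pentPart {m k : ℕ} (j : Fin k) (s : Finset ((Fin m × Fin 2) ⊕ (Fin k × Fin 5))) :
    Finset (Fin 5) :=
  Finset.univ.filter fun i => Sum.inr (j, i) ∈ s

/-- The complex `Σ^m ∗^k C₅`: the `m`-fold suspension of the join of `k` pentagons
(for `k = 0` this is the octahedral sphere, boundary of the `m`-dimensional cross-polytope). -/
def sigmaJoinC5 (m k : ℕ) : SC ((Fin m × Fin 2) ⊕ (Fin k × Fin 5)) where
  faces := {s | (∀ j : Fin m, ¬ (Sum.inl (j, 0) ∈ s ∧ Sum.inl (j, 1) ∈ s)) ∧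
      ∀ j : Fin k, (pentPart j s).card ≤ 1 ∨ ∃ i : Fin 5, pentPart j s ⊆ {i, i + 1}}
  empty_mem := by
    refine ⟨by simp, fun j => Or.inl ?_⟩
    simp [pentPart]
  down := by
    intro s t hs hts
    refine ⟨fun j hj => hs.1 j ⟨hts hj.1, hts hj.2⟩, fun j => ?_⟩
    have hsub : pentPart j t ⊆ pentPart j s := fun i hi => by
      simp only [pentPart, Finset.mem_filter] at *
      exact ⟨hi.1, hts hi.2⟩
    rcases hs.2 j with h | ⟨i, hi⟩
    · exact Or.inl (le_trans (Finset.card_le_card hsub) h)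
    · exact Or.inr ⟨i, hsub.trans hi⟩

/-- The antipode number of a vertex: the number of vertices `w` with `{v,w}` a missing edge. -/
def iota (K : SC V) (v : V) : ℕ :=
  {w | w ∈ K.verts ∧ w ≠ v ∧ ({v, w} : Finset V) ∉ K.faces}.ncard

/-- The polar size: the minimal antipode number among vertices. -/
def polar (K : SC V) : ℕ := sInf (K.iota '' K.verts)

/-- The number of missing edges. -/
def missingEdges (K : SC V) : ℕ :=
  {s : Finset V | ↑s ⊆ K.verts ∧ s.card = 2 ∧ s ∉ K.faces}.ncard

/-- A facet is an inclusion-maximal face. -/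
def IsFacet (K : SC V) (s : Finset V) : Prop :=
  s ∈ K.faces ∧ ∀ t ∈ K.faces, s ⊆ t → t = s

/-- The `h`-polynomial of a complex of dimension `d-1`:
`h(z) = Σ_i f_i (z-1)^(d-i)`. -/
def hPoly (K : SC V) (d : ℕ) : Polynomial ℤ :=
  ∑ i ∈ Finset.range (d + 1), Polynomial.C (K.fvec i : ℤ) * (Polynomial.X - 1) ^ (d - i)

/-- `γ : ℕ → ℤ` is the γ-vector of `K` (viewed as a `(d-1)`-dimensional homology sphere):
`h(z) = Σ_i γ_i z^i (1+z)^(d-2i)` with `γ_i = 0` for `i > d/2`. -/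
def IsGammaVector (K : SC V) (d : ℕ) (γ : ℕ → ℤ) : Prop :=
  (∀ i, d < 2 * i → γ i = 0) ∧
  K.hPoly d = ∑ i ∈ Finset.range (d / 2 + 1),
    Polynomial.C (γ i) * Polynomial.X ^ i * (1 + Polynomial.X) ^ (d - 2 * i)

/-- The simplicial boundary operator over `𝔽₂`, indexed by cardinality:
`boundary K n` maps chains supported on faces of cardinality `n+1` to chains on faces of
cardinality `n`. -/
def boundary (K : SC V) (n : ℕ) :
    ((K.facesCard (n + 1)) →₀ ZMod 2) →ₗ[ZMod 2] ((K.facesCard n) →₀ ZMod 2) :=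
  Finsupp.lsum (ZMod 2) fun s => LinearMap.toSpanSingleton (ZMod 2) _ <|
    ∑ v ∈ s.1.attach,
      Finsupp.single (⟨s.1.erase v.1,
        ⟨K.down s.2.1 (Finset.erase_subset _ _),
          by simp [Finset.card_erase_of_mem v.2, s.2.2]⟩⟩ : K.facesCard n) 1

/-- The cycles of cardinality `n` (every `0`-chain is a cycle; this yields reduced homology). -/
def cycles (K : SC V) : (n : ℕ) → Submodule (ZMod 2) ((K.facesCard n) →₀ ZMod 2)
  | 0 => ⊤
  | (n + 1) => LinearMap.ker (K.boundary n)

/-- `K` is a homology sphere of dimension `d-1` (over the field `𝔽₂`): it is pure of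
dimension `d-1` and, for every face `f`, the reduced homology of the link of `f` vanishes
below the top dimension `d-1-|f|` and has rank one there. (Homological dimension `i`
corresponds to cardinality index `i+1`.) -/
def IsHomologySphere (K : SC V) (d : ℕ) : Prop :=
  (∀ s ∈ K.faces, s.card ≤ d) ∧
  (∀ s ∈ K.faces, ∃ t ∈ K.faces, s ⊆ t ∧ t.card = d) ∧
  ∀ f ∈ K.faces,
    (∀ n < d - f.card, LinearMap.range ((K.lk f).boundary n) = (K.lk f).cycles n) ∧
    Module.finrank (ZMod 2) ↥((K.lk f).cycles (d - f.card)) =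
      Module.finrank (ZMod 2) ↥(LinearMap.range ((K.lk f).boundary (d - f.card))) + 1

end SC

open SC

namespace SC

variable {V : Type} [DecidableEq V]

set_option linter.unusedSectionVars false

lemma eq_of_faces {K L : SC V} (h : K.faces = L.faces) : K = L := by
  cases K; cases L; cases h; rfl

lemma mem_lk {K : SC V} {f : Finset V} (hf : f ∈ K.faces) (s : Finset V) :
    s ∈ (K.lk f).faces ↔ Disjoint s f ∧ s ∪ f ∈ K.faces := by
  constructor
  · rintro (rfl | h)
    · simpa using hf
    · exact h
  · exact fun h => Or.inr h

lemma lk_empty (K : SC V) : K.lk ∅ = K := by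
  apply eq_of_faces
  ext s
  constructor
  · rintro (rfl | ⟨-, h⟩)
    · exact K.empty_mem
    · simpa using h
  · intro h
    exact Or.inr ⟨Finset.disjoint_empty_right s, by simpa using h⟩

lemma lk_lk (K : SC V) {f g : Finset V} (h : Disjoint g f) :
    (K.lk f).lk g = K.lk (g ∪ f) := by
  apply eq_of_faces
  ext s
  constructor
  · rintro (rfl | ⟨hsg, (he | ⟨hgf, hu⟩)⟩)
    · exact Or.inl rfl
    · have : s = ∅ := by
        have := Finset.union_eq_empty.mp he
        exact this.1
      exact Or.inl this
    · refine Or.inr ⟨?_, ?_⟩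
      · rw [Finset.disjoint_union_right]
        exact ⟨hsg, (Finset.disjoint_union_left.mp hgf).1⟩
      · rwa [← Finset.union_assoc]
  · rintro (rfl | ⟨hd, hu⟩)
    · exact Or.inl rfl
    · rw [Finset.disjoint_union_right] at hd
      refine Or.inr ⟨hd.1, Or.inr ⟨?_, ?_⟩⟩
      · rw [Finset.disjoint_union_left]
        exact ⟨hd.2, h⟩
      · rwa [Finset.union_assoc]

lemma mem_verts_lk {K : SC V} {f : Finset V} (hf : f ∈ K.faces) (u : V) :
    u ∈ (K.lk f).verts ↔ u ∉ f ∧ {u} ∪ f ∈ K.faces := by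
  rw [verts, Set.mem_setOf_eq, mem_lk hf, Finset.disjoint_singleton_left]

lemma mem_verts_of_mem_face {K : SC V} {s : Finset V} (hs : s ∈ K.faces) {u : V}
    (hu : u ∈ s) : u ∈ K.verts :=
  K.down hs (Finset.singleton_subset_iff.mpr hu)

lemma lk_flag {K : SC V} (hflag : K.Flag) {f : Finset V} (hf : f ∈ K.faces) :
    (K.lk f).Flag := by
  intro s hs hpairs
  have hsv : ∀ u ∈ s, u ∉ f ∧ {u} ∪ f ∈ K.faces := fun u hu =>
    (mem_verts_lk hf u).mp (hs hu)
  have hdisj : Disjoint s f := Finset.disjoint_left.mpr fun {a} ha haf => (hsv a ha).1 haf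
  rw [mem_lk hf]
  refine ⟨hdisj, hflag _ ?_ ?_⟩
  · intro a ha
    rcases Finset.mem_union.mp ha with h | h
    · exact mem_verts_of_mem_face (hsv a h).2 (by simp)
    · exact mem_verts_of_mem_face hf h
  · intro a ha b hb hab
    rcases Finset.mem_union.mp ha with h1 | h1 <;> rcases Finset.mem_union.mp hb with h2 | h2
    · have := ((mem_lk hf _).mp (hpairs a h1 b h2 hab)).2
      exact K.down this Finset.subset_union_left
    · refine K.down (hsv a h1).2 ?_
      intro x hx
      rcases Finset.mem_insert.mp hx with rfl | hx
      · simp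
      · simp only [Finset.mem_singleton] at hx; subst hx; exact Finset.mem_union_right _ h2
    · refine K.down (hsv b h2).2 ?_
      intro x hx
      rcases Finset.mem_insert.mp hx with rfl | hx
      · exact Finset.mem_union_right _ h1
      · simp only [Finset.mem_singleton] at hx; subst hx; simp
    · refine K.down hf ?_
      intro x hx
      rcases Finset.mem_insert.mp hx with rfl | hx
      · exact h1
      · simp only [Finset.mem_singleton] at hx; subst hx; exact h2

lemma hs_aux_congr {K L : SC V} (h : K = L) {m m' : ℕ} (hm : m = m')
    (H : (∀ n < m, LinearMap.range (K.boundary n) = K.cycles n) ∧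
       Module.finrank (ZMod 2) ↥(K.cycles m) =
         Module.finrank (ZMod 2) ↥(LinearMap.range (K.boundary m)) + 1) :
    (∀ n < m', LinearMap.range (L.boundary n) = L.cycles n) ∧
       Module.finrank (ZMod 2) ↥(L.cycles m') =
         Module.finrank (ZMod 2) ↥(LinearMap.range (L.boundary m')) + 1 := by
  subst h; subst hm; exact H

lemma lk_hs {K : SC V} {d : ℕ} (hK : K.IsHomologySphere d) {f : Finset V}
    (hf : f ∈ K.faces) : (K.lk f).IsHomologySphere (d - f.card) := by
  obtain ⟨hdim, hpure, hlink⟩ := hK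
  refine ⟨?_, ?_, ?_⟩
  · intro s hs
    obtain ⟨hd, hu⟩ := (mem_lk hf _).mp hs
    have h1 := hdim _ hu
    rw [Finset.card_union_of_disjoint hd] at h1
    omega
  · intro s hs
    obtain ⟨hd, hu⟩ := (mem_lk hf _).mp hs
    obtain ⟨t, ht, hsub, hcard⟩ := hpure _ hu
    have hft : f ⊆ t := Finset.union_subset_iff.mp hsub |>.2
    refine ⟨t \ f, (mem_lk hf _).mpr ⟨Finset.sdiff_disjoint, ?_⟩, ?_, ?_⟩
    · rwa [Finset.sdiff_union_of_subset hft]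
    · exact Finset.subset_sdiff.mpr ⟨(Finset.union_subset_iff.mp hsub).1, hd⟩
    · rw [Finset.card_sdiff_of_subset hft, hcard]
  · intro g hg
    obtain ⟨hd, hu⟩ := (mem_lk hf _).mp hg
    have h3 := hlink (g ∪ f) hu
    have hcard : (g ∪ f).card = g.card + f.card := Finset.card_union_of_disjoint hd
    have heq : d - f.card - g.card = d - (g ∪ f).card := by rw [hcard]; omega
    exact hs_aux_congr (lk_lk K hd).symm heq.symm h3

lemma boundary_apply (K : SC V) (n : ℕ) (z : (K.facesCard (n + 1)) →₀ ZMod 2)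
    (r : K.facesCard n) :
    K.boundary n z r = ∑ s ∈ z.support, z s *
      ∑ u ∈ (s : Finset V).attach, if (s : Finset V).erase u.1 = (r : Finset V) then 1 else 0 := by
  rw [boundary, Finsupp.lsum_apply, Finsupp.sum, Finsupp.finset_sum_apply]
  refine Finset.sum_congr rfl fun s hs => ?_
  rw [LinearMap.toSpanSingleton_apply, Finsupp.smul_apply, Finsupp.finset_sum_apply,
    smul_eq_mul]
  congr 1
  refine Finset.sum_congr rfl fun u hu => ?_
  rw [Finsupp.single_apply]
  congr 1
  simp [Subtype.ext_iff]

lemma exists_antipode [Fintype V] {K : SC V} {d : ℕ} (hflag : K.Flag)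
    (hK : K.IsHomologySphere d) {v : V} (hv : v ∈ K.verts) :
    ∃ w ∈ K.verts, w ≠ v ∧ ({v, w} : Finset V) ∉ K.faces := by
  by_contra hcon
  push_neg at hcon
  have hd1 : 1 ≤ d := by
    have := hK.1 _ hv
    simpa using this
  -- every face of cardinality d contains v
  have hvin : ∀ s ∈ K.facesCard d, v ∈ s := by
    intro s hs
    by_contra hvs
    have hface : s ∪ {v} ∈ K.faces := by
      apply hflag
      · intro a ha
        rcases Finset.mem_union.mp (Finset.mem_coe.mp ha) with h | h
        · exact mem_verts_of_mem_face hs.1 h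
        · simp only [Finset.mem_singleton] at h; subst h; exact hv
      · intro a ha b hb hab
        rcases Finset.mem_union.mp ha with h1 | h1 <;> rcases Finset.mem_union.mp hb with h2 | h2
        · refine K.down hs.1 ?_
          intro x hx
          rcases Finset.mem_insert.mp hx with rfl | hx
          · exact h1
          · simp only [Finset.mem_singleton] at hx; subst hx; exact h2
        · simp only [Finset.mem_singleton] at h2; subst h2
          have := hcon a (mem_verts_of_mem_face hs.1 h1) hab
          rwa [Finset.pair_comm] at this
        · simp only [Finset.mem_singleton] at h1; subst h1
          exact hcon b (mem_verts_of_mem_face hs.1 h2) (Ne.symm hab)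
        · simp only [Finset.mem_singleton] at h1 h2; subst h1; subst h2; exact absurd rfl hab
    have hcard : (s ∪ {v}).card = d + 1 := by
      rw [Finset.card_union_of_disjoint (by simpa using hvs), hs.2]
      simp
    have := hK.1 _ hface
    omega
  -- a nonzero cycle in top dimension
  have h3' := hs_aux_congr (lk_empty K) (show d - (∅ : Finset V).card = d by simp)
    (hK.2.2 ∅ K.empty_mem)
  have hne : K.cycles d ≠ ⊥ := by
    intro hbot
    rw [hbot, finrank_bot] at h3'
    omega
  obtain ⟨z, hzmem, hz0⟩ := Submodule.exists_mem_ne_zero_of_ne_bot hne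
  obtain ⟨e, rfl⟩ : ∃ e, d = e + 1 := ⟨d - 1, by omega⟩
  have hker : K.boundary e z = 0 := hzmem
  obtain ⟨s₀, hs₀⟩ := Finsupp.support_nonempty_iff.mpr hz0
  have hvs₀ : v ∈ (s₀ : Finset V) := hvin _ s₀.2
  have hrface : (s₀ : Finset V).erase v ∈ K.facesCard e := by
    refine ⟨K.down s₀.2.1 (Finset.erase_subset _ _), ?_⟩
    rw [Finset.card_erase_of_mem hvs₀, s₀.2.2]
    omega
  set r : K.facesCard e := ⟨(s₀ : Finset V).erase v, hrface⟩ with hr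
  have heval : K.boundary e z r = z s₀ := by
    rw [boundary_apply]
    rw [Finset.sum_eq_single s₀]
    · have hinner : ∑ u ∈ (s₀ : Finset V).attach,
          (if (s₀ : Finset V).erase u.1 = (r : Finset V) then (1 : ZMod 2) else 0) = 1 := by
        rw [Finset.sum_eq_single_of_mem (⟨v, hvs₀⟩ : {x // x ∈ (s₀ : Finset V)})
          (Finset.mem_attach _ _)]
        · simp [hr]
        · intro u hu hune
          have huv : u.1 ≠ v := fun h => hune (Subtype.ext h)
          rw [if_neg]
          intro hcontra
          have : u.1 ∈ (s₀ : Finset V).erase u.1 := by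
            rw [hcontra, hr]
            exact Finset.mem_erase.mpr ⟨huv, u.2⟩
          exact absurd this (Finset.notMem_erase _ _)
      rw [hinner, mul_one]
    · intro s hs hsne
      have hzero : ∑ u ∈ (s : Finset V).attach,
          (if (s : Finset V).erase u.1 = (r : Finset V) then (1 : ZMod 2) else 0) = 0 := by
        refine Finset.sum_eq_zero fun u hu => ?_
        rw [if_neg]
        intro hcontra
        have hvs : v ∈ (s : Finset V) := hvin _ s.2
        have huveq : u.1 = v := by
          by_contra huv
          have : v ∈ (s : Finset V).erase u.1 := Finset.mem_erase.mpr ⟨Ne.symm huv, hvs⟩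
          rw [hcontra, hr] at this
          exact absurd this (Finset.notMem_erase _ _)
        have : (s : Finset V) = (s₀ : Finset V) := by
          have h1 : insert v ((s : Finset V).erase v) = (s : Finset V) :=
            Finset.insert_erase hvs
          have h2 : insert v ((s₀ : Finset V).erase v) = (s₀ : Finset V) :=
            Finset.insert_erase hvs₀
          rw [← h1, ← h2]
          rw [← huveq] at h2 ⊢
          rw [hcontra, hr, huveq]
        exact hsne (Subtype.ext this)
      rw [hzero, mul_zero]
    · intro h
      exact absurd hs₀ h
  rw [hker] at heval
  simp only [Finsupp.coe_zero, Pi.zero_apply] at heval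
  exact absurd heval.symm (Finsupp.mem_support_iff.mp hs₀)

lemma susp_key [Fintype V] : ∀ (n : ℕ) (K : SC V) (d : ℕ), K.Flag → K.IsHomologySphere d →
    ∀ v w : V, v ∈ K.verts →
    {x | x ∈ K.verts ∧ x ≠ v ∧ ({v, x} : Finset V) ∉ K.faces} = {w} →
    ∀ s ∈ (K.lk {v}).faces, s.card = n → s ∪ {w} ∈ K.faces := by
  intro n
  induction n with
  | zero =>
    intro K d hflag hK v w hv hA s hs hcard
    rw [Finset.card_eq_zero] at hcard
    subst hcard
    rw [Finset.empty_union]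
    have hw : w ∈ {x | x ∈ K.verts ∧ x ≠ v ∧ ({v, x} : Finset V) ∉ K.faces} := by
      rw [hA]; rfl
    exact hw.1
  | succ n ih =>
    intro K d hflag hK v w hv hA s hs hcard
    have hv' : ({v} : Finset V) ∈ K.faces := hv
    obtain ⟨hdisj, hsv⟩ := (mem_lk hv' s).mp hs
    have hvns : v ∉ s := fun h =>
      (Finset.disjoint_left.mp hdisj h) (Finset.mem_singleton_self v)
    obtain ⟨u, hus⟩ : s.Nonempty := Finset.card_pos.mp (by omega)
    have hune : u ≠ v := fun h => hvns (h ▸ hus)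
    have huface : ({u} : Finset V) ∈ K.faces := K.down hsv (by simp [hus])
    have huvface : ({u, v} : Finset V) ∈ K.faces := by
      refine K.down hsv ?_
      intro x hx
      simp only [Finset.mem_insert, Finset.mem_singleton] at hx
      rcases hx with rfl | rfl
      · exact Finset.mem_union_left _ hus
      · exact Finset.mem_union_right _ (by simp)
    set L := K.lk {u} with hL
    have hLflag : L.Flag := lk_flag hflag huface
    have hLhs := lk_hs hK huface
    have hvL : v ∈ L.verts := by
      rw [mem_verts_lk huface]
      have hvnu : v ∉ ({u} : Finset V) := by
        simp only [Finset.mem_singleton]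
        exact Ne.symm hune
      refine ⟨hvnu, ?_⟩
      have hvu : ({v} : Finset V) ∪ {u} = {u, v} := by
        ext a
        simp only [Finset.mem_union, Finset.mem_singleton, Finset.mem_insert]
        exact or_comm
      rw [hvu]
      exact huvface
    have huverts : u ∈ K.verts := mem_verts_of_mem_face huface (by simp)
    have hsub : ∀ x ∈ {x | x ∈ L.verts ∧ x ≠ v ∧ ({v, x} : Finset V) ∉ L.faces}, x = w := by
      intro x hx
      obtain ⟨hxL, hxv, hxface⟩ := hx
      by_contra hxw
      obtain ⟨hxu, hxuf⟩ := (mem_verts_lk huface x).mp hxL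
      have hxu' : x ≠ u := by simpa using hxu
      have hxK : x ∈ K.verts := mem_verts_of_mem_face hxuf (by simp)
      have hvx : ({v, x} : Finset V) ∈ K.faces := by
        by_contra hc
        have hxmem : x ∈ ({w} : Set V) := hA ▸ (⟨hxK, hxv, hc⟩ :
          x ∈ {x | x ∈ K.verts ∧ x ≠ v ∧ ({v, x} : Finset V) ∉ K.faces})
        exact hxw hxmem
      apply hxface
      rw [mem_lk huface]
      constructor
      · rw [Finset.disjoint_left]
        intro a ha hau
        simp only [Finset.mem_insert, Finset.mem_singleton] at ha
        simp only [Finset.mem_singleton] at hau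
        subst hau
        rcases ha with rfl | rfl
        · exact hune rfl
        · exact hxu' rfl
      · apply hflag
        · intro a ha
          simp only [Finset.coe_union, Finset.coe_insert, Finset.coe_singleton,
            Set.mem_union, Set.mem_insert_iff, Set.mem_singleton_iff] at ha
          rcases ha with (rfl | rfl) | rfl
          exacts [hv, hxK, huverts]
        · intro a ha b hb hab
          have hmem : ∀ y ∈ ({v, x} ∪ {u} : Finset V), y = v ∨ y = x ∨ y = u := by
            intro y hy
            simp only [Finset.mem_union, Finset.mem_insert, Finset.mem_singleton] at hy
            tauto
          have e2 : ({v, u} : Finset V) ∈ K.faces := Finset.pair_comm u v ▸ huvface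
          have e3 : ({x, u} : Finset V) ∈ K.faces := by
            have hxe : ({x} : Finset V) ∪ {u} = {x, u} := by
              ext a
              simp only [Finset.mem_union, Finset.mem_singleton, Finset.mem_insert]
            rwa [hxe] at hxuf
          rcases hmem a ha with rfl | rfl | rfl <;> rcases hmem b hb with rfl | rfl | rfl <;>
            first
              | exact absurd rfl hab
              | assumption
              | (rw [Finset.pair_comm]; assumption)
    have hwL : w ∈ {x | x ∈ L.verts ∧ x ≠ v ∧ ({v, x} : Finset V) ∉ L.faces} := by
      obtain ⟨w', hw'1, hw'2, hw'3⟩ := exists_antipode hLflag hLhs hvL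
      have hww : w' = w := hsub w' ⟨hw'1, hw'2, hw'3⟩
      subst hww
      exact ⟨hw'1, hw'2, hw'3⟩
    have hAL : {x | x ∈ L.verts ∧ x ≠ v ∧ ({v, x} : Finset V) ∉ L.faces} = {w} :=
      Set.eq_singleton_iff_unique_mem.mpr ⟨hwL, hsub⟩
    have hvL' : ({v} : Finset V) ∈ L.faces := hvL
    have ht : s.erase u ∈ (L.lk {v}).faces := by
      rw [mem_lk hvL']
      constructor
      · rw [Finset.disjoint_left]
        intro a ha hav
        simp only [Finset.mem_singleton] at hav
        subst hav
        exact hvns (Finset.mem_of_mem_erase ha)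
      · rw [mem_lk huface]
        constructor
        · rw [Finset.disjoint_left]
          intro a ha hau
          simp only [Finset.mem_singleton] at hau
          subst hau
          rcases Finset.mem_union.mp ha with h | h
          · exact (Finset.notMem_erase _ _) h
          · simp only [Finset.mem_singleton] at h
            exact hune h
        · have hset : s.erase u ∪ {v} ∪ {u} = s ∪ {v} := by
            ext a
            simp only [Finset.mem_union, Finset.mem_erase, Finset.mem_singleton]
            constructor
            · rintro ((⟨-, h⟩ | rfl) | rfl)
              exacts [Or.inl h, Or.inr rfl, Or.inl hus]
            · rintro (h | rfl)
              · by_cases hau : a = u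
                · exact Or.inr hau
                · exact Or.inl (Or.inl ⟨hau, h⟩)
              · exact Or.inl (Or.inr rfl)
          rw [hset]
          exact hsv
    have hcard' : (s.erase u).card = n := by
      rw [Finset.card_erase_of_mem hus, hcard]
      omega
    have hres := ih L (d - ({u} : Finset V).card) hLflag hLhs v w hvL hAL (s.erase u) ht hcard'
    obtain ⟨hdisj2, hK2⟩ := (mem_lk huface _).mp hres
    have hset2 : s.erase u ∪ {w} ∪ {u} = s ∪ {w} := by
      ext a
      simp only [Finset.mem_union, Finset.mem_erase, Finset.mem_singleton]
      constructor
      · rintro ((⟨-, h⟩ | rfl) | rfl)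
        exacts [Or.inl h, Or.inr rfl, Or.inl hus]
      · rintro (h | rfl)
        · by_cases hau : a = u
          · exact Or.inr hau
          · exact Or.inl (Or.inl ⟨hau, h⟩)
        · exact Or.inl (Or.inr rfl)
    rwa [hset2] at hK2

lemma mem_susp {Γ : SC V} (s : Finset (Bool ⊕ V)) :
    s ∈ Γ.susp.faces ↔ s.toLeft.card ≤ 1 ∧ s.toRight ∈ Γ.faces := Iff.rfl

lemma inl_mem_verts_susp (Γ : SC V) (b : Bool) : Sum.inl b ∈ Γ.susp.verts := by
  rw [verts, Set.mem_setOf_eq, mem_susp]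
  constructor
  · have h : ({Sum.inl b} : Finset (Bool ⊕ V)).toLeft = {b} := by
      ext a; simp [Finset.mem_toLeft]
    rw [h]; simp
  · have h : ({Sum.inl b} : Finset (Bool ⊕ V)).toRight = ∅ := by
      ext a; simp [Finset.mem_toRight]
    rw [h]; exact Γ.empty_mem

lemma inr_mem_verts_susp (Γ : SC V) (u : V) : Sum.inr u ∈ Γ.susp.verts ↔ u ∈ Γ.verts := by
  rw [verts, Set.mem_setOf_eq, mem_susp]
  have h1 : ({Sum.inr u} : Finset (Bool ⊕ V)).toLeft = ∅ := by ext a; simp [Finset.mem_toLeft]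
  have h2 : ({Sum.inr u} : Finset (Bool ⊕ V)).toRight = {u} := by ext a; simp [Finset.mem_toRight]
  rw [h1, h2]
  simp [verts]

end SC

/-- A `(d-1)`-dimensional flag homology sphere has polar size `1` iff it is the
suspension of a `(d-2)`-dimensional flag homology sphere. -/
theorem polar_eq_one_iff_susp {V : Type} [DecidableEq V] [Fintype V]
    (K : SC V) (d : ℕ) (hflag : K.Flag) (hK : K.IsHomologySphere d) :
    K.polar = 1 ↔
      ∃ Γ : SC V, Γ.Flag ∧ Γ.IsHomologySphere (d - 1) ∧ Isom K Γ.susp := by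
  constructor
  · intro hpolar
    have hSne : (K.iota '' K.verts).Nonempty := by
      by_contra h
      rw [Set.not_nonempty_iff_eq_empty] at h
      rw [polar, h, Nat.sInf_empty] at hpolar
      exact absurd hpolar (by norm_num)
    have hmem1 : 1 ∈ K.iota '' K.verts := by
      rw [← hpolar, polar]
      exact Nat.sInf_mem hSne
    obtain ⟨v, hv, hiota⟩ := hmem1
    rw [iota] at hiota
    obtain ⟨w, hA⟩ := Set.ncard_eq_one.mp hiota
    have hwv : w ∈ K.verts ∧ w ≠ v ∧ ({v, w} : Finset V) ∉ K.faces := by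
      have : w ∈ {x | x ∈ K.verts ∧ x ≠ v ∧ ({v, x} : Finset V) ∉ K.faces} := by
        rw [hA]; rfl
      exact this
    have hv' : ({v} : Finset V) ∈ K.faces := hv
    have hnotadj : ∀ x ∈ K.verts, x ≠ v → x ≠ w → ({v, x} : Finset V) ∈ K.faces := by
      intro x hx hxv hxw
      by_contra hc
      have : x ∈ {y | y ∈ K.verts ∧ y ≠ v ∧ ({v, y} : Finset V) ∉ K.faces} := ⟨hx, hxv, hc⟩
      rw [hA] at this
      exact hxw this
    have hΓverts : (K.lk {v}).verts = K.verts \ {v, w} := by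
      ext u
      rw [mem_verts_lk hv']
      constructor
      · rintro ⟨huv, huf⟩
        have hu1 : u ∈ K.verts := mem_verts_of_mem_face huf (by simp)
        have huv' : u ≠ v := by simpa using huv
        have huw : u ≠ w := by
          rintro rfl
          apply hwv.2.2
          have he : ({u} : Finset V) ∪ {v} = {v, u} := by
            ext a
            simp only [Finset.mem_union, Finset.mem_singleton, Finset.mem_insert]
            exact or_comm
          rwa [he] at huf
        exact ⟨hu1, by simp [huv', huw]⟩
      · rintro ⟨hu1, hu2⟩
        simp only [Set.mem_insert_iff, Set.mem_singleton_iff, not_or] at hu2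
        obtain ⟨huv, huw⟩ := hu2
        refine ⟨by simpa using huv, ?_⟩
        have he : ({u} : Finset V) ∪ {v} = {v, u} := by
          ext a
          simp only [Finset.mem_union, Finset.mem_singleton, Finset.mem_insert]
          exact or_comm
        rw [he]
        exact hnotadj u hu1 huv huw
    have hchar : ∀ s : Finset V, ↑s ⊆ K.verts →
        (s ∈ K.faces ↔ (¬(v ∈ s ∧ w ∈ s) ∧ s \ {v, w} ∈ (K.lk {v}).faces)) := by
      intro s hsV
      constructor
      · intro hsf
        constructor
        · rintro ⟨hvs, hws⟩
          apply hwv.2.2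
          refine K.down hsf ?_
          intro a ha
          rcases Finset.mem_insert.mp ha with rfl | ha
          · exact hvs
          · simp only [Finset.mem_singleton] at ha; subst ha; exact hws
        · rw [mem_lk hv']
          refine ⟨by simp, ?_⟩
          apply hflag
          · intro a ha
            simp only [Finset.coe_union, Finset.coe_sdiff, Finset.coe_singleton,
              Set.mem_union, Set.mem_diff, Set.mem_singleton_iff, Finset.coe_insert,
              Set.mem_insert_iff] at ha
            rcases ha with ⟨h, -⟩ | rfl
            · exact hsV h
            · exact hv
          · intro a ha b hb hab
            rcases Finset.mem_union.mp ha with h1 | h1 <;>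
              rcases Finset.mem_union.mp hb with h2 | h2
            · refine K.down hsf ?_
              intro x hx
              rcases Finset.mem_insert.mp hx with rfl | hx
              · exact (Finset.mem_sdiff.mp h1).1
              · simp only [Finset.mem_singleton] at hx; subst hx
                exact (Finset.mem_sdiff.mp h2).1
            · simp only [Finset.mem_singleton] at h2; subst h2
              obtain ⟨has, hanv⟩ := Finset.mem_sdiff.mp h1
              simp only [Finset.mem_insert, Finset.mem_singleton, not_or] at hanv
              rw [Finset.pair_comm]
              exact hnotadj a (hsV has) hanv.1 hanv.2
            · simp only [Finset.mem_singleton] at h1; subst h1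
              obtain ⟨hbs, hbnv⟩ := Finset.mem_sdiff.mp h2
              simp only [Finset.mem_insert, Finset.mem_singleton, not_or] at hbnv
              exact hnotadj b (hsV hbs) hbnv.1 hbnv.2
            · simp only [Finset.mem_singleton] at h1 h2; subst h1; subst h2
              exact absurd rfl hab
      · rintro ⟨hnb, hsd⟩
        by_cases hvs : v ∈ s
        · have hws : w ∉ s := fun h => hnb ⟨hvs, h⟩
          have he : s = (s \ {v, w}) ∪ {v} := by
            ext a
            simp only [Finset.mem_union, Finset.mem_sdiff, Finset.mem_insert,
              Finset.mem_singleton, not_or]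
            constructor
            · intro ha
              by_cases hav : a = v
              · exact Or.inr hav
              · refine Or.inl ⟨ha, hav, ?_⟩
                rintro rfl
                exact hws ha
            · rintro (⟨ha, -⟩ | rfl)
              · exact ha
              · exact hvs
          rw [he]
          exact ((mem_lk hv' _).mp hsd).2
        · by_cases hws : w ∈ s
          · have hkey := susp_key (s \ {v, w}).card K d hflag hK v w hv hA
              (s \ {v, w}) hsd rfl
            have he : (s \ {v, w}) ∪ {w} = s := by
              ext a
              simp only [Finset.mem_union, Finset.mem_sdiff, Finset.mem_insert,
                Finset.mem_singleton, not_or]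
              constructor
              · rintro (⟨ha, -⟩ | rfl)
                · exact ha
                · exact hws
              · intro ha
                by_cases haw : a = w
                · exact Or.inr haw
                · refine Or.inl ⟨ha, ?_, haw⟩
                  rintro rfl
                  exact hvs ha
            rwa [he] at hkey
          · have he : s \ {v, w} = s := by
              ext a
              simp only [Finset.mem_sdiff, Finset.mem_insert, Finset.mem_singleton, not_or]
              constructor
              · rintro ⟨ha, -⟩
                exact ha
              · intro ha
                refine ⟨ha, ?_, ?_⟩ <;> rintro rfl <;> [exact hvs ha; exact hws ha]
            rw [← he]
            exact K.down ((mem_lk hv' _).mp hsd).2 Finset.subset_union_left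
    refine ⟨K.lk {v}, lk_flag hflag hv', by simpa using lk_hs hK hv', ?_⟩
    set φ : V → Bool ⊕ V := fun x =>
      if x = v then Sum.inl true else if x = w then Sum.inl false else Sum.inr x with hφ
    have hφv : φ v = Sum.inl true := by simp [hφ]
    have hφw : φ w = Sum.inl false := by simp [hφ, hwv.2.1]
    have hφo : ∀ x, x ≠ v → x ≠ w → φ x = Sum.inr x := by
      intro x h1 h2
      simp [hφ, h1, h2]
    have hφinj : Function.Injective φ := by
      intro a b hab
      by_cases hav : a = v <;> by_cases haw : a = w <;>
        by_cases hbv : b = v <;> by_cases hbw : b = w <;>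
        simp_all [hφv, hφw, hφo]
    have htL : ∀ s : Finset V, ∀ b : Bool,
        b ∈ (s.image φ).toLeft ↔ (b = true ∧ v ∈ s) ∨ (b = false ∧ w ∈ s) := by
      intro s b
      rw [Finset.mem_toLeft, Finset.mem_image]
      constructor
      · rintro ⟨x, hx, he⟩
        by_cases hxv : x = v
        · subst hxv; rw [hφv] at he
          injection he with h
          exact Or.inl ⟨h.symm, hx⟩
        · by_cases hxw : x = w
          · subst hxw; rw [hφw] at he
            injection he with h
            exact Or.inr ⟨h.symm, hx⟩
          · rw [hφo x hxv hxw] at he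
            exact absurd he (by simp)
      · rintro (⟨rfl, hvs⟩ | ⟨rfl, hws⟩)
        · exact ⟨v, hvs, hφv⟩
        · exact ⟨w, hws, hφw⟩
    have hcard1 : ∀ s : Finset V, ((s.image φ).toLeft.card ≤ 1 ↔ ¬(v ∈ s ∧ w ∈ s)) := by
      intro s
      constructor
      · rintro hc ⟨hvs, hws⟩
        have h1 : true ∈ (s.image φ).toLeft := (htL s true).mpr (Or.inl ⟨rfl, hvs⟩)
        have h2 : false ∈ (s.image φ).toLeft := (htL s false).mpr (Or.inr ⟨rfl, hws⟩)
        have hsub : ({true, false} : Finset Bool) ⊆ (s.image φ).toLeft := by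
          intro b hb
          rcases Finset.mem_insert.mp hb with rfl | hb
          · exact h1
          · simp only [Finset.mem_singleton] at hb; subst hb; exact h2
        have := Finset.card_le_card hsub
        have h2c : ({true, false} : Finset Bool).card = 2 := rfl
        omega
      · intro hnb
        by_cases hvs : v ∈ s
        · have hws : w ∉ s := fun h => hnb ⟨hvs, h⟩
          have hsub : (s.image φ).toLeft ⊆ {true} := by
            intro b hb
            rcases (htL s b).mp hb with ⟨rfl, -⟩ | ⟨rfl, h⟩
            · simp
            · exact absurd h hws
          exact le_trans (Finset.card_le_card hsub) (by simp)
        · have hsub : (s.image φ).toLeft ⊆ {false} := by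
            intro b hb
            rcases (htL s b).mp hb with ⟨rfl, h⟩ | ⟨rfl, -⟩
            · exact absurd h hvs
            · simp
          exact le_trans (Finset.card_le_card hsub) (by simp)
    have hRset : ∀ s : Finset V, (s.image φ).toRight = s \ {v, w} := by
      intro s
      ext a
      rw [Finset.mem_toRight, Finset.mem_image]
      simp only [Finset.mem_sdiff, Finset.mem_insert, Finset.mem_singleton, not_or]
      constructor
      · rintro ⟨x, hx, he⟩
        by_cases hxv : x = v
        · subst hxv; rw [hφv] at he; exact absurd he (by simp)
        · by_cases hxw : x = w
          · subst hxw; rw [hφw] at he; exact absurd he (by simp)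
          · rw [hφo x hxv hxw] at he
            injection he with h
            subst h
            exact ⟨hx, hxv, hxw⟩
      · rintro ⟨ha, hav, haw⟩
        exact ⟨a, ha, hφo a hav haw⟩
    refine ⟨φ, hφinj.injOn, ?_, ?_⟩
    · ext y
      constructor
      · rintro ⟨x, hx, rfl⟩
        by_cases hxv : x = v
        · subst hxv; rw [hφv]; exact inl_mem_verts_susp _ true
        · by_cases hxw : x = w
          · subst hxw; rw [hφw]; exact inl_mem_verts_susp _ false
          · rw [hφo x hxv hxw, inr_mem_verts_susp, hΓverts]
            exact ⟨hx, by simp [hxv, hxw]⟩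
      · intro hy
        match y with
        | Sum.inl true => exact ⟨v, hv, hφv⟩
        | Sum.inl false => exact ⟨w, hwv.1, hφw⟩
        | Sum.inr u =>
          have hu : u ∈ (K.lk {v}).verts := (inr_mem_verts_susp _ u).mp hy
          rw [hΓverts] at hu
          obtain ⟨hu1, hu2⟩ := hu
          simp only [Set.mem_insert_iff, Set.mem_singleton_iff, not_or] at hu2
          exact ⟨u, hu1, hφo u hu2.1 hu2.2⟩
    · intro s hsV
      rw [hchar s hsV, mem_susp, hRset s]
      exact and_congr_left fun _ => (hcard1 s).symm
  · rintro ⟨Γ, hΓflag, hΓhs, φ, hinj, himg, hfaces⟩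
    obtain ⟨v, hv, hφv⟩ : ∃ v ∈ K.verts, φ v = Sum.inl true := by
      have h := inl_mem_verts_susp Γ true
      rw [← himg] at h
      obtain ⟨v, hv, he⟩ := h
      exact ⟨v, hv, he⟩
    obtain ⟨w, hw, hφw⟩ : ∃ w ∈ K.verts, φ w = Sum.inl false := by
      have h := inl_mem_verts_susp Γ false
      rw [← himg] at h
      obtain ⟨w, hw, he⟩ := h
      exact ⟨w, hw, he⟩
    have hvw : v ≠ w := by
      rintro rfl
      rw [hφv] at hφw
      exact absurd hφw (by simp)
    have hpair : ∀ x ∈ K.verts, ∀ y ∈ K.verts, x ≠ y →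
        (({x, y} : Finset V) ∈ K.faces ↔
          ({φ x, φ y} : Finset (Bool ⊕ V)) ∈ Γ.susp.faces) := by
      intro x hx y hy hxy
      have hsV : ↑({x, y} : Finset V) ⊆ K.verts := by
        intro a ha
        simp only [Finset.coe_insert, Finset.coe_singleton, Set.mem_insert_iff,
          Set.mem_singleton_iff] at ha
        rcases ha with rfl | rfl
        · exact hx
        · exact hy
      have h := hfaces {x, y} hsV
      rwa [Finset.image_insert, Finset.image_singleton] at h
    have hvwnf : ({v, w} : Finset V) ∉ K.faces := by
      rw [hpair v hv w hw hvw, hφv, hφw, mem_susp]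
      rintro ⟨h1, -⟩
      have hsub : ({true, false} : Finset Bool) ⊆
          ({Sum.inl true, Sum.inl false} : Finset (Bool ⊕ V)).toLeft := by
        intro b hb
        rw [Finset.mem_toLeft]
        rcases Finset.mem_insert.mp hb with rfl | hb
        · simp
        · simp only [Finset.mem_singleton] at hb; subst hb; simp
      have h2 := Finset.card_le_card hsub
      have h3 : ({true, false} : Finset Bool).card = 2 := rfl
      omega
    have hadj : ∀ x ∈ K.verts, x ≠ v → x ≠ w → ({v, x} : Finset V) ∈ K.faces := by
      intro x hx hxv hxw
      rw [hpair v hv x hx (Ne.symm hxv), hφv]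
      have hxverts : φ x ∈ Γ.susp.verts := himg ▸ Set.mem_image_of_mem φ hx
      rcases hφx : φ x with b | u
      · cases b
        · exact absurd (hinj hx hw (by rw [hφx, hφw])) hxw
        · exact absurd (hinj hx hv (by rw [hφx, hφv])) hxv
      · rw [mem_susp]
        constructor
        · have hsub : ({Sum.inl true, Sum.inr u} : Finset (Bool ⊕ V)).toLeft ⊆ {true} := by
            intro b hb
            rw [Finset.mem_toLeft] at hb
            simp only [Finset.mem_insert, Finset.mem_singleton] at hb
            rcases hb with hb | hb
            · injection hb with h; subst h; simp
            · exact absurd hb (by simp)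
          exact le_trans (Finset.card_le_card hsub) (by simp)
        · have hRs : ({Sum.inl true, Sum.inr u} : Finset (Bool ⊕ V)).toRight = {u} := by
            ext a
            rw [Finset.mem_toRight]
            simp
          rw [hRs]
          rw [hφx, inr_mem_verts_susp] at hxverts
          exact hxverts
    have hAv : {x | x ∈ K.verts ∧ x ≠ v ∧ ({v, x} : Finset V) ∉ K.faces} = {w} := by
      ext x
      simp only [Set.mem_setOf_eq, Set.mem_singleton_iff]
      constructor
      · rintro ⟨hx1, hx2, hx3⟩
        by_contra hxw
        exact hx3 (hadj x hx1 hx2 hxw)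
      · rintro rfl
        exact ⟨hw, Ne.symm hvw, hvwnf⟩
    have hiota1 : K.iota v = 1 := by
      rw [iota, hAv, Set.ncard_singleton]
    have hlb : ∀ m ∈ K.iota '' K.verts, 1 ≤ m := by
      rintro m ⟨x, hx, rfl⟩
      obtain ⟨y, hy1, hy2, hy3⟩ := exists_antipode hflag hK hx
      have hne : {z | z ∈ K.verts ∧ z ≠ x ∧ ({x, z} : Finset V) ∉ K.faces}.Nonempty :=
        ⟨y, hy1, hy2, hy3⟩
      rw [iota]
      exact (Set.ncard_pos (Set.toFinite _)).mpr hne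
    rw [polar]
    refine le_antisymm (Nat.sInf_le ⟨v, hv, hiota1⟩) (le_csInf ⟨1, v, hv, hiota1⟩ hlb)

end
end

section
/- Let S be a flag homology sphere that is not a suspension, and let s be a vertex of S. Then there exist two disjoint facets T_1, T_2 of S, neither of which contains s. -/
open Finset Polynomial

noncomputable section

open SC

namespace SCAux

variable {V : Type} [DecidableEq V]

lemma mem_verts_of_mem {S : SC V} {f : Finset V} (hf : f ∈ S.faces) {x : V} (hx : x ∈ f) :
    x ∈ S.verts :=
  S.down hf (Finset.singleton_subset_iff.mpr hx)

lemma pair_mem {S : SC V} {f : Finset V} (hf : f ∈ S.faces) {a b : V} (ha : a ∈ f) (hb : b ∈ f) :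
    ({a, b} : Finset V) ∈ S.faces :=
  S.down hf (Finset.insert_subset_iff.mpr ⟨ha, Finset.singleton_subset_iff.mpr hb⟩)

lemma isFacet_of_card {S : SC V} {d : ℕ} (hS : S.IsHomologySphere d) {f : Finset V}
    (hf : f ∈ S.faces) (hcard : f.card = d) : S.IsFacet f :=
  ⟨hf, fun t ht hsub => (Finset.eq_of_subset_of_card_le hsub (by rw [hcard]; exact hS.1 t ht)).symm⟩

lemma flag_insert {S : SC V} (hflag : S.Flag) {f : Finset V} (hf : f ∈ S.faces) {x : V}
    (hx : x ∈ S.verts) (hadj : ∀ y ∈ f, y ≠ x → ({x, y} : Finset V) ∈ S.faces) :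
    insert x f ∈ S.faces := by
  apply hflag
  · intro a ha
    simp only [Finset.coe_insert, Set.mem_insert_iff, Finset.mem_coe] at ha
    rcases ha with rfl | ha
    · exact hx
    · exact mem_verts_of_mem hf ha
  · intro a ha b hb hab
    rcases Finset.mem_insert.mp ha with ha' | ha'
    · rcases Finset.mem_insert.mp hb with hb' | hb'
      · exact absurd (ha'.trans hb'.symm) hab
      · rw [ha']; exact hadj b hb' (fun h => hab (ha'.trans h.symm))
    · rcases Finset.mem_insert.mp hb with hb' | hb'
      · rw [hb', Finset.pair_comm]; exact hadj a ha' (fun h => hab (h.trans hb'.symm))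
      · exact pair_mem hf ha' hb'

lemma cycle_exists {K : SC V} {n : ℕ} (hn : n = 1)
    (hpos : 0 < Module.finrank (ZMod 2) ↥(K.cycles n)) :
    ∃ c : (K.facesCard 1) →₀ ZMod 2, c ≠ 0 ∧ K.boundary 0 c = 0 := by
  subst hn
  have hnt : Nontrivial ↥(K.cycles 1) := Module.nontrivial_of_finrank_pos hpos
  obtain ⟨x, hx⟩ := exists_ne (0 : ↥(K.cycles 1))
  exact ⟨x.1, fun h => hx (Subtype.ext h), x.2⟩

/-- key consequence of the homology hypothesis: a face of cardinality `d-1` has at least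
two distinct completions to a face of cardinality `d`. -/
lemma two_completions {S : SC V} {d : ℕ} (hS : S.IsHomologySphere d)
    {R : Finset V} (hR : R ∈ S.faces) (hd : 1 ≤ d) (hcard : R.card = d - 1) :
    ∃ v w, v ≠ w ∧ v ∉ R ∧ w ∉ R ∧ insert v R ∈ S.faces ∧ insert w R ∈ S.faces := by
  obtain ⟨hdim, hpure, hlink⟩ := hS
  obtain ⟨-, h2⟩ := hlink R hR
  have hdR : d - R.card = 1 := by omega
  have hpos : 0 < Module.finrank (ZMod 2) ↥((S.lk R).cycles (d - R.card)) := by omega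
  obtain ⟨c, hc0, hker⟩ := cycle_exists hdR hpos
  have hempty : (∅ : Finset V) ∈ (S.lk R).facesCard 0 := ⟨(S.lk R).empty_mem, rfl⟩
  -- evaluate the boundary at the empty face
  have heval : (c.sum fun _ a => a) = 0 := by
    have h0 : ((S.lk R).boundary 0 c) ⟨∅, hempty⟩ = 0 := by rw [hker]; rfl
    rw [SC.boundary, Finsupp.lsum_apply, Finsupp.sum_apply] at h0
    rw [← h0]
    apply Finsupp.sum_congr
    intro t ht
    have hone : ((∑ v ∈ t.1.attach, Finsupp.single
        (⟨t.1.erase v.1, ⟨(S.lk R).down t.2.1 (Finset.erase_subset _ _),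
          by simp [Finset.card_erase_of_mem v.2, t.2.2]⟩⟩ : (S.lk R).facesCard 0)
          (1 : ZMod 2))) ⟨∅, hempty⟩ = 1 := by
      have hcard1 : t.1.attach.card = 1 := by rw [Finset.card_attach]; exact t.2.2
      obtain ⟨v₀, hv₀⟩ := Finset.card_eq_one.mp hcard1
      rw [hv₀, Finset.sum_singleton, Finsupp.single_apply]
      rw [if_pos]
      apply Subtype.ext
      obtain ⟨a, ha⟩ := Finset.card_eq_one.mp t.2.2
      have hv₀a : v₀.1 ∈ ({a} : Finset V) := by rw [← ha]; exact v₀.2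
      have hva : v₀.1 = a := Finset.mem_singleton.mp hv₀a
      show t.1.erase v₀.1 = ∅
      rw [hva, ha, Finset.erase_singleton]
    simp only [LinearMap.toSpanSingleton_apply, Finsupp.smul_apply, hone, smul_eq_mul, mul_one]
  have hsupp : c.support.Nonempty := Finsupp.support_nonempty_iff.mpr hc0
  obtain ⟨s₁, hs₁⟩ := hsupp
  have h2supp : ∃ s₂ ∈ c.support, s₂ ≠ s₁ := by
    by_contra hcon
    push_neg at hcon
    have hsx : c.support = {s₁} := Finset.eq_singleton_iff_unique_mem.mpr ⟨hs₁, hcon⟩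
    have : (c.sum fun _ a => a) = c s₁ := by rw [Finsupp.sum, hsx, Finset.sum_singleton]
    rw [heval] at this
    exact Finsupp.mem_support_iff.mp hs₁ this.symm
  obtain ⟨s₂, hs₂, hne⟩ := h2supp
  obtain ⟨v, hv⟩ := Finset.card_eq_one.mp s₁.2.2
  obtain ⟨w, hw⟩ := Finset.card_eq_one.mp s₂.2.2
  have hvw : w ≠ v := by
    rintro rfl
    exact hne (Subtype.ext (by rw [hv, hw]))
  have hfv : v ∉ R ∧ insert v R ∈ S.faces := by
    rcases s₁.2.1 with h | ⟨hdisj, hu⟩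
    · exfalso; have := s₁.2.2; rw [h] at this; simp at this
    · rw [hv] at hdisj hu
      refine ⟨Finset.disjoint_singleton_left.mp hdisj, ?_⟩
      rwa [← Finset.insert_eq] at hu
  have hfw : w ∉ R ∧ insert w R ∈ S.faces := by
    rcases s₂.2.1 with h | ⟨hdisj, hu⟩
    · exfalso; have := s₂.2.2; rw [h] at this; simp at this
    · rw [hw] at hdisj hu
      refine ⟨Finset.disjoint_singleton_left.mp hdisj, ?_⟩
      rwa [← Finset.insert_eq] at hu
  exact ⟨v, w, hvw.symm, hfv.1, hfw.1, hfv.2, hfw.2⟩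

lemma completions_not_adj {S : SC V} {d : ℕ} (hflag : S.Flag) (hS : S.IsHomologySphere d)
    {R : Finset V} (hR : R ∈ S.faces) (hcard : R.card = d - 1) (hd : 1 ≤ d)
    {v w : V} (hvw : v ≠ w) (hv : v ∉ R) (hw : w ∉ R)
    (hfv : insert v R ∈ S.faces) (hfw : insert w R ∈ S.faces) :
    ({v, w} : Finset V) ∉ S.faces := by
  intro hpair
  have hface : insert v (insert w R) ∈ S.faces := by
    apply flag_insert hflag hfw (mem_verts_of_mem hpair (Finset.mem_insert_self _ _))
    intro y hy hyv
    rcases Finset.mem_insert.mp hy with rfl | hy'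
    · exact hpair
    · exact pair_mem hfv (Finset.mem_insert_self v R) (Finset.mem_insert_of_mem hy')
  have hle := hS.1 _ hface
  have hvnot : v ∉ insert w R := by
    intro h
    rcases Finset.mem_insert.mp h with h' | h'
    · exact hvw h'
    · exact hv h'
  have hcard2 : (insert v (insert w R)).card = d + 1 := by
    rw [Finset.card_insert_of_notMem hvnot, Finset.card_insert_of_notMem hw, hcard]
    omega
  omega

lemma second_completion {S : SC V} {d : ℕ} (hflag : S.Flag) (hS : S.IsHomologySphere d)
    {R : Finset V} (hR : R ∈ S.faces) (hd : 1 ≤ d) (hcard : R.card = d - 1)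
    {y : V} (hyR : y ∉ R) (hfy : insert y R ∈ S.faces) :
    ∃ e, e ≠ y ∧ e ∉ R ∧ insert e R ∈ S.faces ∧ ({e, y} : Finset V) ∉ S.faces := by
  obtain ⟨v, w, hvw, hv, hw, hfv, hfw⟩ := two_completions hS hR hd hcard
  by_cases hvy : v = y
  · subst hvy
    exact ⟨w, Ne.symm hvw, hw, hfw,
      completions_not_adj hflag hS hR hcard hd (Ne.symm hvw) hw hyR hfw hfy⟩
  · exact ⟨v, hvy, hv, hfv,
      completions_not_adj hflag hS hR hcard hd hvy hv hyR hfv hfy⟩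

lemma exchange {S : SC V} {d : ℕ} (hflag : S.Flag) (hS : S.IsHomologySphere d)
    {T : Finset V} (hT : T ∈ S.faces) (hcard : T.card = d) {y : V} (hy : y ∈ T) :
    ∃ e, e ≠ y ∧ e ∉ T ∧ insert e (T.erase y) ∈ S.faces ∧
      (insert e (T.erase y)).card = d ∧ ({e, y} : Finset V) ∉ S.faces := by
  have hd : 1 ≤ d := by
    have := Finset.card_pos.mpr ⟨y, hy⟩
    omega
  have hRf : T.erase y ∈ S.faces := S.down hT (Finset.erase_subset _ _)
  have hRcard : (T.erase y).card = d - 1 := by rw [Finset.card_erase_of_mem hy, hcard]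
  have hyR : y ∉ T.erase y := Finset.notMem_erase _ _
  have hfy : insert y (T.erase y) ∈ S.faces := by rw [Finset.insert_erase hy]; exact hT
  obtain ⟨e, hey, heR, hfe, hmiss⟩ := second_completion hflag hS hRf hd hRcard hyR hfy
  have heT : e ∉ T := by
    intro h
    rcases Finset.mem_insert.mp (by rw [Finset.insert_erase hy]; exact h :
      e ∈ insert y (T.erase y)) with h' | h'
    · exact hey h'
    · exact heR h'
  refine ⟨e, hey, heT, hfe, ?_, hmiss⟩
  rw [Finset.card_insert_of_notMem heR, hRcard]
  omega

lemma exists_nonneighbor {S : SC V} {d : ℕ} (hflag : S.Flag) (hS : S.IsHomologySphere d)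
    {v : V} (hv : v ∈ S.verts) :
    ∃ u, u ∈ S.verts ∧ u ≠ v ∧ ({v, u} : Finset V) ∉ S.faces := by
  have hsing : ({v} : Finset V) ∈ S.faces := hv
  obtain ⟨T, hT, hsub, hcardT⟩ := hS.2.1 _ hsing
  have hvT : v ∈ T := hsub (Finset.mem_singleton_self v)
  obtain ⟨e, hev, heT, hf, hcF, hmiss⟩ := exchange hflag hS hT hcardT hvT
  exact ⟨e, mem_verts_of_mem hf (Finset.mem_insert_self _ _), hev,
    by rwa [Finset.pair_comm]⟩

lemma comb_susp {S : SC V} (hflag : S.Flag) {p q : V} (hp : p ∈ S.verts) (hq : q ∈ S.verts)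
    (hpq : p ≠ q) (hmiss : ({p, q} : Finset V) ∉ S.faces)
    (hadj : ∀ x ∈ S.verts, x ≠ p → x ≠ q →
      ({p, x} : Finset V) ∈ S.faces ∧ ({q, x} : Finset V) ∈ S.faces) :
    ∃ Γ : SC V, Isom S Γ.susp := by
  classical
  set Γ : SC V := S.induce (S.verts \ {p, q}) with hΓ
  set φ : V → Bool ⊕ V :=
    fun x => if x = p then Sum.inl true else if x = q then Sum.inl false else Sum.inr x
    with hφdef
  have hφp : φ p = Sum.inl true := by simp [hφdef]
  have hφq : φ q = Sum.inl false := by simp [hφdef, Ne.symm hpq]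
  have hφo : ∀ x, x ≠ p → x ≠ q → φ x = Sum.inr x := by
    intro x h1 h2; simp [hφdef, h1, h2]
  have hchar : ∀ f : Finset V, ↑f ⊆ S.verts →
      (f ∈ S.faces ↔ ¬(p ∈ f ∧ q ∈ f) ∧ (f.erase p).erase q ∈ S.faces) := by
    intro f hfv
    constructor
    · intro hf
      exact ⟨fun h => hmiss (pair_mem hf h.1 h.2),
        S.down hf ((Finset.erase_subset _ _).trans (Finset.erase_subset _ _))⟩
    · rintro ⟨hnot, hg⟩
      apply hflag f hfv
      intro a ha b hb hab
      have hverts : ∀ x ∈ f, x ∈ S.verts := fun x hx => hfv (Finset.mem_coe.mpr hx)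
      by_cases hap : a = p
      · subst hap
        by_cases hbq : b = q
        · exact absurd ⟨ha, hbq ▸ hb⟩ hnot
        · exact (hadj b (hverts b hb) (Ne.symm hab) hbq).1
      · by_cases haq : a = q
        · subst haq
          by_cases hbp : b = p
          · exact absurd ⟨hbp ▸ hb, ha⟩ hnot
          · exact (hadj b (hverts b hb) hbp (Ne.symm hab)).2
        · by_cases hbp : b = p
          · subst hbp
            rw [Finset.pair_comm]
            exact (hadj a (hverts a ha) hap haq).1
          · by_cases hbq : b = q
            · subst hbq
              rw [Finset.pair_comm]
              exact (hadj a (hverts a ha) hap haq).2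
            · exact pair_mem hg (Finset.mem_erase.mpr ⟨haq, Finset.mem_erase.mpr ⟨hap, ha⟩⟩)
                (Finset.mem_erase.mpr ⟨hbq, Finset.mem_erase.mpr ⟨hbp, hb⟩⟩)
  have hsingL : ∀ b : Bool, ({Sum.inl b} : Finset (Bool ⊕ V)).toLeft = {b} := by
    intro b; ext c; simp
  have hsingL' : ∀ b : Bool, ({Sum.inl b} : Finset (Bool ⊕ V)).toRight = ∅ := by
    intro b; ext c; simp
  have hsingR : ∀ x : V, ({Sum.inr x} : Finset (Bool ⊕ V)).toLeft = ∅ := by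
    intro x; ext c; simp
  have hsingR' : ∀ x : V, ({Sum.inr x} : Finset (Bool ⊕ V)).toRight = {x} := by
    intro x; ext c; simp
  have hvertsusp : ∀ w : Bool ⊕ V, w ∈ (SC.susp Γ).verts ↔
      (∃ b, w = Sum.inl b) ∨ ∃ x, w = Sum.inr x ∧ x ∈ S.verts ∧ x ≠ p ∧ x ≠ q := by
    intro w
    cases w with
    | inl b =>
      constructor
      · intro _; exact Or.inl ⟨b, rfl⟩
      · intro _
        show ({Sum.inl b} : Finset (Bool ⊕ V)).toLeft ∈ SC.S0.faces ∧
          ({Sum.inl b} : Finset (Bool ⊕ V)).toRight ∈ Γ.faces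
        rw [hsingL, hsingL']
        exact ⟨by simp [SC.S0], Γ.empty_mem⟩
    | inr x =>
      constructor
      · intro hw
        obtain ⟨h1, h2⟩ := hw
        rw [hsingR'] at h2
        obtain ⟨hxf, hxsub⟩ := h2
        have hxd : x ∈ S.verts \ {p, q} := hxsub (by simp)
        refine Or.inr ⟨x, rfl, hxd.1, ?_, ?_⟩
        · intro h; exact hxd.2 (by simp [h])
        · intro h; exact hxd.2 (by simp [h])
      · rintro (⟨b, hb⟩ | ⟨y, hy, hyv, hyp, hyq⟩)
        · exact absurd hb (by simp)
        · obtain rfl : x = y := Sum.inr.inj hy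
          show ({Sum.inr x} : Finset (Bool ⊕ V)).toLeft ∈ SC.S0.faces ∧
            ({Sum.inr x} : Finset (Bool ⊕ V)).toRight ∈ Γ.faces
          rw [hsingR, hsingR']
          refine ⟨by simp [SC.S0], ⟨hyv, ?_⟩⟩
          intro z hz
          simp only [Finset.coe_singleton, Set.mem_singleton_iff] at hz
          subst hz
          exact ⟨hyv, by simp [hyp, hyq]⟩
  refine ⟨Γ, φ, ?_, ?_, ?_⟩
  · intro x hx y hy hxy
    by_cases hxp : x = p <;> by_cases hxq : x = q <;>
      by_cases hyp : y = p <;> by_cases hyq : y = q <;>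
        simp_all [hφdef]
  · ext w
    constructor
    · rintro ⟨x, hx, rfl⟩
      by_cases hxp : x = p
      · subst hxp; rw [hφp]; exact (hvertsusp _).mpr (Or.inl ⟨true, rfl⟩)
      · by_cases hxq : x = q
        · subst hxq; rw [hφq]; exact (hvertsusp _).mpr (Or.inl ⟨false, rfl⟩)
        · rw [hφo x hxp hxq]
          exact (hvertsusp _).mpr (Or.inr ⟨x, rfl, hx, hxp, hxq⟩)
    · intro hw
      rcases (hvertsusp w).mp hw with ⟨b, rfl⟩ | ⟨x, rfl, hxv, hxp, hxq⟩
      · cases b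
        · exact ⟨q, hq, hφq⟩
        · exact ⟨p, hp, hφp⟩
      · exact ⟨x, hxv, hφo x hxp hxq⟩
  · intro f hfv
    have hgsub : ↑((f.erase p).erase q) ⊆ S.verts \ {p, q} := by
      intro x hx
      have hx' : x ∈ (f.erase p).erase q := Finset.mem_coe.mp hx
      obtain ⟨hxq, hx2⟩ := Finset.mem_erase.mp hx'
      obtain ⟨hxp, hxf⟩ := Finset.mem_erase.mp hx2
      exact ⟨hfv (Finset.mem_coe.mpr hxf), by simp [hxp, hxq]⟩
    have hTL : ∀ b : Bool, b ∈ (f.image φ).toLeft ↔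
        (b = true ∧ p ∈ f) ∨ (b = false ∧ q ∈ f) := by
      intro b
      rw [Finset.mem_toLeft, Finset.mem_image]
      constructor
      · rintro ⟨x, hx, hφx⟩
        by_cases hxp : x = p
        · subst hxp; rw [hφp] at hφx; exact Or.inl ⟨(Sum.inl.inj hφx).symm, hx⟩
        · by_cases hxq : x = q
          · subst hxq; rw [hφq] at hφx; exact Or.inr ⟨(Sum.inl.inj hφx).symm, hx⟩
          · rw [hφo x hxp hxq] at hφx; exact absurd hφx (by simp)
      · rintro (⟨rfl, hpf⟩ | ⟨rfl, hqf⟩)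
        · exact ⟨p, hpf, hφp⟩
        · exact ⟨q, hqf, hφq⟩
    have hTR : (f.image φ).toRight = (f.erase p).erase q := by
      ext x
      rw [Finset.mem_toRight, Finset.mem_image]
      constructor
      · rintro ⟨y, hy, hφy⟩
        by_cases hyp : y = p
        · subst hyp; rw [hφp] at hφy; exact absurd hφy (by simp)
        · by_cases hyq : y = q
          · subst hyq; rw [hφq] at hφy; exact absurd hφy (by simp)
          · rw [hφo y hyp hyq] at hφy
            obtain rfl : y = x := Sum.inr.inj hφy
            exact Finset.mem_erase.mpr ⟨hyq, Finset.mem_erase.mpr ⟨hyp, hy⟩⟩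
      · intro hx
        obtain ⟨hxq, hx2⟩ := Finset.mem_erase.mp hx
        obtain ⟨hxp, hxf⟩ := Finset.mem_erase.mp hx2
        exact ⟨x, hxf, hφo x hxp hxq⟩
    have hcardTL : ((f.image φ).toLeft.card ≤ 1) ↔ ¬(p ∈ f ∧ q ∈ f) := by
      constructor
      · rintro hc ⟨hpf, hqf⟩
        have ht : true ∈ (f.image φ).toLeft := (hTL true).mpr (Or.inl ⟨rfl, hpf⟩)
        have hf2 : false ∈ (f.image φ).toLeft := (hTL false).mpr (Or.inr ⟨rfl, hqf⟩)
        have hsub2 : ({true, false} : Finset Bool) ⊆ (f.image φ).toLeft := by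
          intro b hb
          rcases Finset.mem_insert.mp hb with rfl | hb'
          · exact ht
          · rw [Finset.mem_singleton.mp hb']; exact hf2
        have h2 := Finset.card_le_card hsub2
        have : ({true, false} : Finset Bool).card = 2 := by decide
        omega
      · intro hn
        rw [Finset.card_le_one]
        intro a ha b hb
        rcases (hTL a).mp ha with ⟨rfl, hpf⟩ | ⟨rfl, hqf⟩ <;>
          rcases (hTL b).mp hb with ⟨rfl, h⟩ | ⟨rfl, h⟩
        · rfl
        · exact absurd ⟨hpf, h⟩ hn
        · exact absurd ⟨h, hqf⟩ hn
        · rfl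
    rw [hchar f hfv]
    show _ ↔ (f.image φ).toLeft ∈ SC.S0.faces ∧ (f.image φ).toRight ∈ Γ.faces
    constructor
    · rintro ⟨hnot, hg⟩
      refine ⟨hcardTL.mpr hnot, ?_⟩
      rw [hTR]
      exact ⟨hg, hgsub⟩
    · rintro ⟨h1, h2⟩
      refine ⟨hcardTL.mp h1, ?_⟩
      rw [hTR] at h2
      exact h2.1

lemma two_nonneighbors {S : SC V} {d : ℕ} (hflag : S.Flag) (hS : S.IsHomologySphere d)
    (hnotsusp : ¬ ∃ Γ : SC V, Isom S Γ.susp) {s : V} (hs : s ∈ S.verts) :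
    ∃ u₁ u₂, u₁ ≠ u₂ ∧ u₁ ∈ S.verts ∧ u₂ ∈ S.verts ∧ u₁ ≠ s ∧ u₂ ≠ s ∧
      ({s, u₁} : Finset V) ∉ S.faces ∧ ({s, u₂} : Finset V) ∉ S.faces := by
  obtain ⟨u₁, hu₁v, hu₁s, hu₁miss⟩ := exists_nonneighbor hflag hS hs
  by_contra hcon
  push_neg at hcon
  have huniq : ∀ u, u ∈ S.verts → u ≠ s → ({s, u} : Finset V) ∉ S.faces → u = u₁ := by
    intro u huv hus humiss
    by_contra hne
    exact humiss (hcon u₁ u (fun h => hne h.symm) hu₁v huv hu₁s hus hu₁miss)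
  apply hnotsusp
  apply comb_susp hflag hs hu₁v (Ne.symm hu₁s) hu₁miss
  intro x hxv hxs hxu₁
  constructor
  · by_contra hxmiss
    exact hxu₁ (huniq x hxv hxs hxmiss)
  · -- {u₁, x} ∈ S.faces
    have hxf : ({x} : Finset V) ∈ S.faces := hxv
    obtain ⟨T, hT, hsubT, hcardT⟩ := hS.2.1 _ hxf
    have hxT : x ∈ T := hsubT (Finset.mem_singleton_self x)
    by_cases hsT : s ∈ T
    · obtain ⟨e, hes, heT, hfe, hce, hmiss'⟩ := exchange hflag hS hT hcardT hsT
      have hex : e = u₁ := by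
        apply huniq e (mem_verts_of_mem hfe (Finset.mem_insert_self _ _)) hes
        rwa [Finset.pair_comm]
      have hxE : x ∈ insert e (T.erase s) :=
        Finset.mem_insert_of_mem (Finset.mem_erase.mpr ⟨hxs, hxT⟩)
      rw [← hex]
      exact pair_mem hfe (Finset.mem_insert_self _ _) hxE
    · have hu₁T : u₁ ∈ T := by
        by_contra hu₁T
        have hface : insert s T ∈ S.faces := by
          apply flag_insert hflag hT hs
          intro y hyT hys
          by_contra hymiss
          exact hu₁T ((huniq y (mem_verts_of_mem hT hyT) hys hymiss) ▸ hyT)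
        have hle := hS.1 _ hface
        have : (insert s T).card = d + 1 := by
          rw [Finset.card_insert_of_notMem hsT, hcardT]
        omega
      exact pair_mem hT hu₁T hxT

lemma descend {S : SC V} {d : ℕ} (hflag : S.Flag) (hS : S.IsHomologySphere d)
    {s u : V} (hmiss : ({s, u} : Finset V) ∉ S.faces)
    {F₁ : Finset V} (hF₁ : F₁ ∈ S.faces) (hu₁ : u ∉ F₁) :
    ∀ k (F : Finset V), F ∈ S.faces → F.card = d → u ∈ F → s ∉ F → (F ∩ F₁).card ≤ k →
    ∃ T₂, T₂ ∈ S.faces ∧ T₂.card = d ∧ s ∉ T₂ ∧ T₂ ∩ F₁ = ∅ := by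
  intro k
  induction k with
  | zero =>
    intro F hF hcard huF hsF hk
    exact ⟨F, hF, hcard, hsF, Finset.card_eq_zero.mp (Nat.le_zero.mp hk)⟩
  | succ n ih =>
    intro F hF hcard huF hsF hk
    by_cases hre : F ∩ F₁ = ∅
    · exact ⟨F, hF, hcard, hsF, hre⟩
    · obtain ⟨y, hy⟩ := Finset.nonempty_iff_ne_empty.mpr hre
      have hyF : y ∈ F := (Finset.mem_inter.mp hy).1
      have hyF₁ : y ∈ F₁ := (Finset.mem_inter.mp hy).2
      have hyu : y ≠ u := fun h => hu₁ (h ▸ hyF₁)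
      obtain ⟨e, hey, heT, hfe, hce, hmiss'⟩ := exchange hflag hS hF hcard hyF
      have huE : u ∈ insert e (F.erase y) :=
        Finset.mem_insert_of_mem (Finset.mem_erase.mpr ⟨Ne.symm hyu, huF⟩)
      have hes : e ≠ s := by
        rintro rfl
        exact hmiss (pair_mem hfe (Finset.mem_insert_self _ _) huE)
      have hsE : s ∉ insert e (F.erase y) := by
        intro h
        rcases Finset.mem_insert.mp h with h' | h'
        · exact hes h'.symm
        · exact hsF (Finset.mem_of_mem_erase h')
      have heF₁ : e ∉ F₁ := fun h => hmiss' (pair_mem hF₁ h hyF₁)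
      have hint : (insert e (F.erase y)) ∩ F₁ = (F ∩ F₁).erase y := by
        ext a
        constructor
        · intro ha
          obtain ⟨ha1, ha2⟩ := Finset.mem_inter.mp ha
          rcases Finset.mem_insert.mp ha1 with rfl | ha1'
          · exact absurd ha2 heF₁
          · obtain ⟨hay, haF⟩ := Finset.mem_erase.mp ha1'
            exact Finset.mem_erase.mpr ⟨hay, Finset.mem_inter.mpr ⟨haF, ha2⟩⟩
        · intro ha
          obtain ⟨hay, ha2⟩ := Finset.mem_erase.mp ha
          obtain ⟨haF, haF₁⟩ := Finset.mem_inter.mp ha2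
          exact Finset.mem_inter.mpr
            ⟨Finset.mem_insert_of_mem (Finset.mem_erase.mpr ⟨hay, haF⟩), haF₁⟩
      have hklt : ((insert e (F.erase y)) ∩ F₁).card ≤ n := by
        rw [hint, Finset.card_erase_of_mem hy]
        omega
      exact ih _ hfe hce huE hsE hklt

end SCAux
open SC

/-- If a flag homology sphere is not a suspension, then for every vertex `s`
there are two disjoint facets avoiding `s`. -/
theorem exists_two_disjoint_facets_avoiding {V : Type} [DecidableEq V] [Fintype V]
    (S : SC V) (d : ℕ) (hflag : S.Flag) (hS : S.IsHomologySphere d)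
    (hnotsusp : ¬ ∃ Γ : SC V, Isom S Γ.susp)
    (s : V) (hs : s ∈ S.verts) :
    ∃ T₁ T₂ : Finset V, S.IsFacet T₁ ∧ S.IsFacet T₂ ∧ Disjoint T₁ T₂ ∧ s ∉ T₁ ∧ s ∉ T₂ := by
  classical
  obtain ⟨u₁, u₂, hne, hu₁v, hu₂v, hu₁s, hu₂s, hm₁, hm₂⟩ :=
    SCAux.two_nonneighbors hflag hS hnotsusp hs
  have hu₁f : ({u₁} : Finset V) ∈ S.faces := hu₁v
  obtain ⟨T, hT, hsubT, hcardT⟩ := hS.2.1 _ hu₁f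
  have hu₁T : u₁ ∈ T := hsubT (Finset.mem_singleton_self u₁)
  have hsT : s ∉ T := fun h => hm₁ (SCAux.pair_mem hT h hu₁T)
  by_cases hu₂T : u₂ ∈ T
  · obtain ⟨e, heu₁, heT, hfe, hce, hmiss'⟩ := SCAux.exchange hflag hS hT hcardT hu₁T
    have hu₂E : u₂ ∈ insert e (T.erase u₁) :=
      Finset.mem_insert_of_mem (Finset.mem_erase.mpr ⟨fun h => hne h.symm, hu₂T⟩)
    have hes : e ≠ s := by
      rintro rfl
      exact hm₂ (SCAux.pair_mem hfe (Finset.mem_insert_self _ _) hu₂E)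
    have hsE : s ∉ insert e (T.erase u₁) := by
      intro h
      rcases Finset.mem_insert.mp h with h' | h'
      · exact hes h'.symm
      · exact hsT (Finset.mem_of_mem_erase h')
    have hu₁E : u₁ ∉ insert e (T.erase u₁) := by
      intro h
      rcases Finset.mem_insert.mp h with h' | h'
      · exact heu₁ h'.symm
      · exact Finset.notMem_erase _ _ h'
    obtain ⟨T₂, hT₂f, hT₂c, hsT₂, hint⟩ :=
      SCAux.descend hflag hS hm₁ hfe hu₁E (T ∩ (insert e (T.erase u₁))).card
        T hT hcardT hu₁T hsT le_rfl
    refine ⟨insert e (T.erase u₁), T₂, SCAux.isFacet_of_card hS hfe hce,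
      SCAux.isFacet_of_card hS hT₂f hT₂c, ?_, hsE, hsT₂⟩
    rw [Finset.disjoint_iff_inter_eq_empty, Finset.inter_comm]
    exact hint
  · have hu₂f : ({u₂} : Finset V) ∈ S.faces := hu₂v
    obtain ⟨T', hT', hsubT', hcardT'⟩ := hS.2.1 _ hu₂f
    have hu₂T' : u₂ ∈ T' := hsubT' (Finset.mem_singleton_self u₂)
    have hsT' : s ∉ T' := fun h => hm₂ (SCAux.pair_mem hT' h hu₂T')
    obtain ⟨T₂, hT₂f, hT₂c, hsT₂, hint⟩ :=
      SCAux.descend hflag hS hm₂ hT hu₂T (T' ∩ T).card T' hT' hcardT' hu₂T' hsT' le_rfl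
    refine ⟨T, T₂, SCAux.isFacet_of_card hS hT hcardT,
      SCAux.isFacet_of_card hS hT₂f hT₂c, ?_, hsT, hsT₂⟩
    rw [Finset.disjoint_iff_inter_eq_empty, Finset.inter_comm]
    exact hint

end
end
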